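/- Let G = (V, E) be a graph with no isolated vertices, at least one edge, V = {v₁, …, v_n}, and let k be a positive integer. Construct the graph H as follows: take k disjoint copies V_j = {v₁^j, …, v_n^j} (j ∈ [k]) of V, let V_s = {s_{uv}, s'_{uv}, s''_{uv} : uv ∈ E}, set V(H) = ⋃_{j=1}^k V_j ∪ V_s, and let E(H) consist of the edges u^j s_{uv}, u^j s'_{uv}, u^j s''_{uv}, v^j s_{uv}, v^j s'_{uv}, v^j s''_{uv} for each uv ∈ E and j ∈ [k], together with all edges between pairs of vertices of V_s (so that V_s forms a clique). Then kn/α(G) + 3|E| ≤ k·χ_f(G) + 3|E| ≤ χ_k(G) + 3|E| ≤ rvd(H) ≤ k·χ(G) + 3|E|, where α(G) is the independence number, χ_f(G) the fractional chromatic number, χ_k(G) the k-fold chromatic number, and χ(G) the chromatic number of G. -/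

import Mathlib

/-!
For the upper bound, colour the copy `(u, j)` by the pair `(j, col u)` for a proper colouring
`col` of `G`, and the clique injectively with fresh colours. Then every closed neighbourhood is
rainbow, which makes `S = N(x) \ {y}` a rainbow `x`-`y` cut for every pair.

For the lower bound, the three clique vertices of an edge `e = uv` are common neighbours of the
nonadjacent vertices `(u, 0)` and `(v, 0)`, and any two of them have the rest of the closed
neighbourhood `N[s_e] = V_s ∪ {(u, j), (v, j)}` as common neighbours. So every rvd-colouring is
injective on `N[s_e]`: the clique takes `3|E|` colours of its own, and `u ↦ {c (u, j)}` is a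
`k`-fold colouring of `G` with the remaining ones. Finally, each colour class of a `k`-fold
colouring is independent, so `k n ≤ χ_k(G) α(G)`, which gives `n / α(G) ≤ χ_f(G)`.
-/
open SimpleGraph

variable {V : Type*}

/-- `c` is a rainbow vertex-disconnection coloring of `G`: for any two distinct vertices
`x, y` there is a set `S` avoiding `x` and `y` that meets every `x`-`y` walk of `G - xy`
(i.e. `x` and `y` lie in different components of `(G - xy) - S`), and which is rainbow
(when `x, y` nonadjacent), resp. such that `S + x` or `S + y` is rainbow (when adjacent). -/
def IsRVDColoring {α : Type*} (G : SimpleGraph V) (c : V → α) : Prop :=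
  ∀ x y : V, x ≠ y → ∃ S : Set V,
    x ∉ S ∧ y ∉ S ∧
    (∀ p : (G.deleteEdges {s(x, y)}).Walk x y, ∃ v ∈ p.support, v ∈ S) ∧
    (G.Adj x y → Set.InjOn c (insert x S) ∨ Set.InjOn c (insert y S)) ∧
    (¬ G.Adj x y → Set.InjOn c S)

/-- The rainbow vertex-disconnection number: the minimum number of colors of a
rainbow vertex-disconnection coloring. -/
noncomputable def rvd (G : SimpleGraph V) : ℕ :=
  sInf {n | ∃ c : V → Fin n, IsRVDColoring G c}

/-- `G` contains `K₄` as a minor (via a minor model with four branch sets). -/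
def HasK4Minor (G : SimpleGraph V) : Prop :=
  ∃ B : Fin 4 → Set V,
    (∀ i, (B i).Nonempty) ∧
    (∀ i, (G.induce (B i)).Connected) ∧
    (∀ i j, i ≠ j → Disjoint (B i) (B j)) ∧
    (∀ i j, i ≠ j → ∃ a ∈ B i, ∃ b ∈ B j, G.Adj a b)

/-- A finite graph is 2-connected if it has at least 3 vertices and deleting any
single vertex leaves a connected graph. -/
def TwoConnected [Fintype V] (G : SimpleGraph V) : Prop :=
  3 ≤ Fintype.card V ∧ ∀ w : V, (G.induce ({w}ᶜ : Set V)).Connected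

/-- Contraction of the edge `uv`: delete `v` and join `u` to the former neighbors of `v`. -/
def contractEdge (G : SimpleGraph V) (u v : V) : SimpleGraph {x : V // x ≠ v} where
  Adj a b := a ≠ b ∧ (G.Adj a b ∨ ((a : V) = u ∧ G.Adj v b) ∨ ((b : V) = u ∧ G.Adj v a))
  symm := by
    constructor
    rintro a b ⟨h1, h2⟩
    refine ⟨h1.symm, ?_⟩
    rcases h2 with h | h | h
    · exact Or.inl h.symm
    · exact Or.inr (Or.inr h)
    · exact Or.inr (Or.inl h)
  loopless := by constructor; rintro a ⟨h, _⟩; exact h rfl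

/-- `T_G(u)`: vertices `x` of degree at least 3 that are adjacent to `u` or joined
to `u` through a `2`-vertex. -/
def Tset [Fintype V] (G : SimpleGraph V) [DecidableRel G.Adj] (u : V) : Set V :=
  {x | 3 ≤ G.degree x ∧ (G.Adj u x ∨ ∃ z : V, G.degree z = 2 ∧ G.Adj u z ∧ G.Adj z x)}

/-- `t_G(u) = |T_G(u)|`. -/
noncomputable def tnum [Fintype V] (G : SimpleGraph V) [DecidableRel G.Adj] (u : V) : ℕ :=
  (Tset G u).ncard

/-- An injective coloring: vertices with a common neighbor get distinct colors. -/
def IsInjectiveColoring {α : Type*} (G : SimpleGraph V) (c : V → α) : Prop :=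
  ∀ u v w : V, G.Adj u w → G.Adj v w → u ≠ v → c u ≠ c v

/-- The injective chromatic number. -/
noncomputable def injChromaticNumber (G : SimpleGraph V) : ℕ :=
  sInf {n | ∃ c : V → Fin n, IsInjectiveColoring G c}

/-- A graph has no cut vertex if deleting any vertex leaves a preconnected graph. -/
def HasNoCutVertex {W : Type*} (H : SimpleGraph W) : Prop :=
  ∀ w : W, (H.induce ({w}ᶜ : Set W)).Preconnected

/-- A block of `G`: a maximal connected subgraph of `G` without a cut vertex. -/
def IsBlock (G : SimpleGraph V) (H : G.Subgraph) : Prop :=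
  H.coe.Connected ∧ HasNoCutVertex H.coe ∧
    ∀ H' : G.Subgraph, H ≤ H' → H'.coe.Connected → HasNoCutVertex H'.coe → H' = H

/-- `c` is a `k`-fold coloring: each vertex receives `k` colors, adjacent vertices get
disjoint color sets. -/
def IsKFoldColoring {n : ℕ} (G : SimpleGraph V) (k : ℕ) (c : V → Finset (Fin n)) : Prop :=
  (∀ v, (c v).card = k) ∧ ∀ u v, G.Adj u v → Disjoint (c u) (c v)

/-- The `k`-fold chromatic number `χ_k(G)`. -/
noncomputable def kfoldChromaticNumber (G : SimpleGraph V) (k : ℕ) : ℕ :=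
  sInf {n | ∃ c : V → Finset (Fin n), IsKFoldColoring G k c}

/-- The fractional chromatic number `χ_f(G) = inf_k χ_k(G)/k`. -/
noncomputable def fracChromaticNumber (G : SimpleGraph V) : ℝ :=
  ⨅ k : {k : ℕ // 0 < k}, (kfoldChromaticNumber G k : ℝ) / (k : ℕ)

/-- The chromatic number as a natural number. -/
noncomputable def natChromaticNumber (G : SimpleGraph V) : ℕ :=
  sInf {n | G.Colorable n}

/-- The independence number `α(G)`. -/
noncomputable def indepNumber (G : SimpleGraph V) : ℕ :=
  sSup {n | ∃ s : Set V, (∀ u ∈ s, ∀ v ∈ s, ¬ G.Adj u v) ∧ s.ncard = n}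

/-- The bipartite graph `G̃` from the reduction: original vertices `V`, vertices
`s_{uv}, s'_{uv}` (type `↥G.edgeSet × Fin 2`, left summand) and `t_{uv}, t'_{uv}`
(right summand); each of `s_{uv}, s'_{uv}` is joined to `u` and `v`, and all
edges between `V_s` and `V_t` are present. -/
def tildeBip (G : SimpleGraph V) :
    SimpleGraph (V ⊕ ((↥G.edgeSet × Fin 2) ⊕ (↥G.edgeSet × Fin 2))) :=
  SimpleGraph.fromRel fun x y =>
    (∃ (a : V) (e : ↥G.edgeSet) (i : Fin 2),
        x = Sum.inl a ∧ y = Sum.inr (Sum.inl (e, i)) ∧ a ∈ (e : Sym2 V)) ∨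
    (∃ p q, x = Sum.inr (Sum.inl p) ∧ y = Sum.inr (Sum.inr q))

/-- The split graph `G̃` from the reduction: original vertices `V` and a clique on
`V_s = {s_{uv}, s'_{uv}, s''_{uv}}`, each of the three joined to `u` and `v`. -/
def tildeSplit (G : SimpleGraph V) : SimpleGraph (V ⊕ (↥G.edgeSet × Fin 3)) :=
  SimpleGraph.fromRel fun x y =>
    (∃ (a : V) (e : ↥G.edgeSet) (i : Fin 3),
        x = Sum.inl a ∧ y = Sum.inr (e, i) ∧ a ∈ (e : Sym2 V)) ∨
    (∃ p q, x = Sum.inr p ∧ y = Sum.inr q)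

/-- The graph `H`: `k` copies of `V` together with `V_s` and `V_t` as in `tildeBip`. -/
def HBip (G : SimpleGraph V) (k : ℕ) :
    SimpleGraph ((V × Fin k) ⊕ ((↥G.edgeSet × Fin 2) ⊕ (↥G.edgeSet × Fin 2))) :=
  SimpleGraph.fromRel fun x y =>
    (∃ (a : V) (j : Fin k) (e : ↥G.edgeSet) (i : Fin 2),
        x = Sum.inl (a, j) ∧ y = Sum.inr (Sum.inl (e, i)) ∧ a ∈ (e : Sym2 V)) ∨
    (∃ p q, x = Sum.inr (Sum.inl p) ∧ y = Sum.inr (Sum.inr q))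

/-- The graph `H`: `k` copies of `V` together with the clique `V_s` as in `tildeSplit`. -/
def HSplit (G : SimpleGraph V) (k : ℕ) :
    SimpleGraph ((V × Fin k) ⊕ (↥G.edgeSet × Fin 3)) :=
  SimpleGraph.fromRel fun x y =>
    (∃ (a : V) (j : Fin k) (e : ↥G.edgeSet) (i : Fin 3),
        x = Sum.inl (a, j) ∧ y = Sum.inr (e, i) ∧ a ∈ (e : Sym2 V)) ∨
    (∃ p q, x = Sum.inr p ∧ y = Sum.inr q)

theorem injOn_of_pairwise_injOn_diff {α β : Type*} {c : α → β} {s : Set α} (t : Fin 3 → α)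
    (ht : Function.Injective (c ∘ t))
    (hpair : ∀ i i', i ≠ i' → Set.InjOn c (s \ {t i}) ∨ Set.InjOn c (s \ {t i'})) :
    Set.InjOn c s := by
  intro a ha b hb hab
  by_contra hne
  let hits (i : Fin 3) : Prop := t i = a ∨ t i = b
  have hits_unique : ∀ i i', hits i → hits i' → i = i' := by
    rintro i i' (hi | hi) (hi' | hi') <;> exact ht (by simp [hi, hi', hab])
  obtain ⟨i, i', hii', hi, hi'⟩ : ∃ i i', i ≠ i' ∧ ¬ hits i ∧ ¬ hits i' := by
    by_cases h0 : hits 0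
    · exact ⟨1, 2, by decide, fun h => absurd (hits_unique 0 1 h0 h) (by decide),
        fun h => absurd (hits_unique 0 2 h0 h) (by decide)⟩
    by_cases h1 : hits 1
    · exact ⟨0, 2, by decide, h0, fun h => absurd (hits_unique 1 2 h1 h) (by decide)⟩
    · exact ⟨0, 1, by decide, h0, h1⟩
  have hmem : ∀ j, ¬ hits j → a ∈ s \ {t j} ∧ b ∈ s \ {t j} := fun j hj =>
    ⟨⟨ha, fun h => hj (.inl h.symm)⟩, ⟨hb, fun h => hj (.inr h.symm)⟩⟩
  rcases hpair i i' hii' with h | h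
  · exact hne (h (hmem i hi).1 (hmem i hi).2 hab)
  · exact hne (h (hmem i' hi').1 (hmem i' hi').2 hab)

namespace IsRVDColoring

variable {W α β : Type*} {H : SimpleGraph W} {c : W → α}

theorem of_injOn_closedNbhd (hc : ∀ x, Set.InjOn c (insert x (H.neighborSet x))) :
    IsRVDColoring H c := by
  intro x y hxy
  refine ⟨H.neighborSet x \ {y}, by simp, by simp, fun p => ?_,
    fun _ => Or.inl ((hc x).mono (Set.insert_subset_insert Set.sdiff_subset)),
    fun _ => (hc x).mono (Set.sdiff_subset.trans (Set.subset_insert _ _))⟩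
  cases p with
  | nil => exact absurd rfl hxy
  | cons h q =>
    rw [deleteEdges_adj, Set.mem_singleton_iff, Sym2.congr_right] at h
    exact ⟨_, List.mem_cons_of_mem _ q.start_mem_support, h.1, h.2⟩

theorem comp (hc : IsRVDColoring H c) {f : α → β} (hf : Function.Injective f) :
    IsRVDColoring H (f ∘ c) := by
  intro x y hxy
  obtain ⟨S, hx, hy, hcut, hadj, hnadj⟩ := hc x y hxy
  exact ⟨S, hx, hy, hcut, fun h => (hadj h).imp hf.comp_injOn hf.comp_injOn,
    fun h => hf.comp_injOn (hnadj h)⟩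

theorem commonNeighbors_subset_of_separates {x y : W} {S : Set W} (hx : x ∉ S) (hy : y ∉ S)
    (hcut : ∀ p : (H.deleteEdges {s(x, y)}).Walk x y, ∃ v ∈ p.support, v ∈ S) :
    H.commonNeighbors x y ⊆ S := by
  intro m ⟨hxm, hym⟩
  have hmx : m ≠ x := hxm.ne.symm
  have hmy : m ≠ y := hym.ne.symm
  have a1 : (H.deleteEdges {s(x, y)}).Adj x m := by
    rw [deleteEdges_adj, Set.mem_singleton_iff, Sym2.congr_right]
    exact ⟨hxm, hmy⟩
  have a2 : (H.deleteEdges {s(x, y)}).Adj m y := by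
    rw [deleteEdges_adj, Set.mem_singleton_iff, Sym2.congr_left]
    exact ⟨hym.symm, hmx⟩
  obtain ⟨v, hv, hvS⟩ := hcut (.cons a1 (.cons a2 .nil))
  simp only [Walk.support_cons, Walk.support_nil, List.mem_cons, List.not_mem_nil,
    or_false] at hv
  rcases hv with rfl | rfl | rfl
  · exact absurd hvS hx
  · exact hvS
  · exact absurd hvS hy

theorem injOn_commonNeighbors (hc : IsRVDColoring H c) {x y : W} (hxy : x ≠ y)
    (h : ¬ H.Adj x y) : Set.InjOn c (H.commonNeighbors x y) := by
  obtain ⟨S, hx, hy, hcut, -, hnadj⟩ := hc x y hxy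
  exact (hnadj h).mono (commonNeighbors_subset_of_separates hx hy hcut)

theorem injOn_insert_commonNeighbors (hc : IsRVDColoring H c) {x y : W} (h : H.Adj x y) :
    Set.InjOn c (insert x (H.commonNeighbors x y)) ∨
      Set.InjOn c (insert y (H.commonNeighbors x y)) := by
  obtain ⟨S, hx, hy, hcut, hadj, -⟩ := hc x y h.ne
  have hsub := commonNeighbors_subset_of_separates hx hy hcut
  exact (hadj h).imp (·.mono (Set.insert_subset_insert hsub))
    (·.mono (Set.insert_subset_insert hsub))

end IsRVDColoring

theorem rvd_le_card {W α : Type*} [Fintype α] {H : SimpleGraph W} {c : W → α}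
    (hc : IsRVDColoring H c) : rvd H ≤ Fintype.card α :=
  Nat.sInf_le ⟨_, hc.comp (Fintype.equivFin α).injective⟩

theorem exists_isRVDColoring_rvd {W : Type*} [Finite W] (H : SimpleGraph W) :
    ∃ c : W → Fin (rvd H), IsRVDColoring H c :=
  Nat.sInf_mem (s := {n | ∃ c : W → Fin n, IsRVDColoring H c}) ⟨Nat.card W, Finite.equivFin W,
    IsRVDColoring.of_injOn_closedNbhd fun _ => (Finite.equivFin W).injective.injOn⟩

section Fractional

variable (G : SimpleGraph V)

theorem exists_isKFoldColoring_fin {β : Type*} [Fintype β] {k : ℕ} (c : V → Finset β)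
    (hcard : ∀ v, (c v).card = k) (hdisj : ∀ u v, G.Adj u v → Disjoint (c u) (c v)) :
    ∃ c' : V → Finset (Fin (Fintype.card β)), IsKFoldColoring G k c' :=
  ⟨fun v => (c v).map (Fintype.equivFin β).toEmbedding, fun v => by simp [hcard],
    fun u v h => by simpa using hdisj u v h⟩

theorem kfoldChromaticNumber_le_card {β : Type*} [Fintype β] {k : ℕ} (c : V → Finset β)
    (hcard : ∀ v, (c v).card = k) (hdisj : ∀ u v, G.Adj u v → Disjoint (c u) (c v)) :
    kfoldChromaticNumber G k ≤ Fintype.card β :=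
  Nat.sInf_le (exists_isKFoldColoring_fin G c hcard hdisj)

theorem exists_isKFoldColoring_kfoldChromaticNumber [Fintype V] (k : ℕ) :
    ∃ c : V → Finset (Fin (kfoldChromaticNumber G k)), IsKFoldColoring G k c := by
  classical
  refine Nat.sInf_mem (s := {n | ∃ c : V → Finset (Fin n), IsKFoldColoring G k c})
    ⟨_, exists_isKFoldColoring_fin G (fun v => {v} ×ˢ (Finset.univ : Finset (Fin k)))
      (fun v => by simp) fun u v h => ?_⟩
  exact Finset.disjoint_product.2 (Or.inl (Finset.disjoint_singleton.2 h.ne))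

theorem le_indepNumber [Fintype V] {s : Finset V} (hs : ∀ u ∈ s, ∀ v ∈ s, ¬ G.Adj u v) :
    s.card ≤ indepNumber G := by
  refine le_csSup ⟨Fintype.card V, ?_⟩ ⟨s, by simpa using hs, Set.ncard_coe_finset s⟩
  rintro n ⟨t, -, rfl⟩
  exact (Set.ncard_le_card t).trans_eq Nat.card_eq_fintype_card

theorem IsKFoldColoring.mul_card_le [Fintype V] {k N : ℕ} {c : V → Finset (Fin N)}
    (hc : IsKFoldColoring G k c) : k * Fintype.card V ≤ N * indepNumber G := by
  classical
  have hclass : ∀ a : Fin N, (Finset.univ.filter (a ∈ c ·)).card ≤ indepNumber G :=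
    fun a => le_indepNumber G fun u hu v hv huv => by
      simp only [Finset.mem_filter, Finset.mem_univ, true_and] at hu hv
      exact Finset.disjoint_left.1 (hc.2 u v huv) hu hv
  calc k * Fintype.card V = ∑ v : V, (Finset.univ.filter (· ∈ c v)).card := by
        simp [hc.1, mul_comm]
    _ = ∑ a : Fin N, (Finset.univ.filter (a ∈ c ·)).card :=
        Finset.sum_card_bipartiteAbove_eq_sum_card_bipartiteBelow _
    _ ≤ N * indepNumber G := by
        simpa using Finset.sum_le_sum fun a (_ : a ∈ Finset.univ) => hclass a

theorem card_div_indepNumber_le_fracChromaticNumber [Fintype V] :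
    (Fintype.card V : ℝ) / indepNumber G ≤ fracChromaticNumber G := by
  have : Nonempty {k : ℕ // 0 < k} := ⟨⟨1, one_pos⟩⟩
  refine le_ciInf fun ⟨m, hm⟩ => ?_
  obtain ⟨c, hc⟩ := exists_isKFoldColoring_kfoldChromaticNumber G m
  rcases (Nat.zero_le (indepNumber G)).eq_or_lt with hα | hα
  · rw [← hα, Nat.cast_zero, div_zero]
    positivity
  rw [div_le_div_iff₀ (by exact_mod_cast hα) (by exact_mod_cast hm)]
  exact_mod_cast (mul_comm (Fintype.card V) m).trans_le hc.mul_card_le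

theorem mul_fracChromaticNumber_le {k : ℕ} (hk : 0 < k) :
    (k : ℝ) * fracChromaticNumber G ≤ kfoldChromaticNumber G k := by
  have hbdd : BddBelow (Set.range fun m : {k : ℕ // 0 < k} =>
      (kfoldChromaticNumber G m : ℝ) / (m : ℕ)) :=
    ⟨0, by rintro _ ⟨m, rfl⟩; positivity⟩
  have hk' : (0 : ℝ) < k := by exact_mod_cast hk
  calc (k : ℝ) * fracChromaticNumber G ≤ k * (kfoldChromaticNumber G k / k) :=
        mul_le_mul_of_nonneg_left (ciInf_le hbdd ⟨k, hk⟩) hk'.le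
    _ = kfoldChromaticNumber G k := mul_div_cancel₀ _ hk'.ne'

end Fractional

namespace HSplit

variable {G : SimpleGraph V} {k : ℕ}

@[simp]
theorem not_adj_inl_inl (a b : V × Fin k) : ¬ (HSplit G k).Adj (.inl a) (.inl b) := by
  simp [HSplit]

@[simp]
theorem adj_inl_inr (a : V × Fin k) (p : G.edgeSet × Fin 3) :
    (HSplit G k).Adj (.inl a) (.inr p) ↔ a.1 ∈ (p.1 : Sym2 V) := by
  rw [HSplit, fromRel_adj]
  constructor
  · rintro ⟨-, (⟨_, _, _, _, h1, h2, h⟩ | ⟨_, _, h1, -⟩) |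
      (⟨_, _, _, _, h1, -⟩ | ⟨_, _, -, h1⟩)⟩
    · cases h1; cases h2; exact h
    all_goals cases h1
  · exact fun h => ⟨Sum.inl_ne_inr, .inl (.inl ⟨a.1, a.2, p.1, p.2, rfl, rfl, h⟩)⟩

@[simp]
theorem adj_inr_inl (p : G.edgeSet × Fin 3) (a : V × Fin k) :
    (HSplit G k).Adj (.inr p) (.inl a) ↔ a.1 ∈ (p.1 : Sym2 V) := by
  rw [adj_comm, adj_inl_inr]

@[simp]
theorem adj_inr_inr (p q : G.edgeSet × Fin 3) :
    (HSplit G k).Adj (.inr p) (.inr q) ↔ p ≠ q := by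
  rw [HSplit, fromRel_adj, ne_eq, Sum.inr.injEq]
  exact ⟨And.left, fun h => ⟨h, .inl (.inr ⟨p, q, rfl, rfl⟩)⟩⟩

theorem inr_mem_closedNbhd_inr (p q : G.edgeSet × Fin 3) :
    (.inr q : (V × Fin k) ⊕ (G.edgeSet × Fin 3)) ∈
      insert (.inr p) ((HSplit G k).neighborSet (.inr p)) := by
  simpa [eq_comm] using em (p = q)

@[simp]
theorem inl_mem_closedNbhd_inr {p : G.edgeSet × Fin 3} {a : V × Fin k} :
    (.inl a : (V × Fin k) ⊕ (G.edgeSet × Fin 3)) ∈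
      insert (.inr p) ((HSplit G k).neighborSet (.inr p)) ↔ a.1 ∈ (p.1 : Sym2 V) := by
  simp

theorem mem_commonNeighbors_of_mem_closedNbhd {e : G.edgeSet} {i i' j : Fin 3}
    {w : (V × Fin k) ⊕ (G.edgeSet × Fin 3)}
    (hw : w ∈ insert (.inr (e, j)) ((HSplit G k).neighborSet (.inr (e, j))))
    (hi : w ≠ .inr (e, i)) (hi' : w ≠ .inr (e, i')) :
    w ∈ (HSplit G k).commonNeighbors (.inr (e, i)) (.inr (e, i')) := by
  rcases w with a | q
  · rw [inl_mem_closedNbhd_inr] at hw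
    exact ⟨(adj_inr_inl _ _).2 hw, (adj_inr_inl _ _).2 hw⟩
  · exact ⟨(adj_inr_inr _ _).2 fun h => hi (h ▸ rfl),
      (adj_inr_inr _ _).2 fun h => hi' (h ▸ rfl)⟩

theorem isRVDColoring_of_coloring {α : Type*} (col : G.Coloring α) :
    IsRVDColoring (HSplit G k) (Sum.map (fun a : V × Fin k => (a.2, col a.1)) id) := by
  refine IsRVDColoring.of_injOn_closedNbhd fun x => ?_
  rintro (b | q) hb (b' | q') hb' h
  · rcases x with a | p
    · rw [(Set.mem_insert_iff.1 hb).resolve_right (not_adj_inl_inl _ _),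
        (Set.mem_insert_iff.1 hb').resolve_right (not_adj_inl_inl _ _)]
    · rw [inl_mem_closedNbhd_inr] at hb hb'
      obtain ⟨hj, hcol⟩ := Prod.ext_iff.1 (Sum.inl_injective h)
      refine congrArg _ (Prod.ext (by_contra fun hne => col.valid ?_ hcol) hj)
      exact G.adj_of_mem_incidenceSet hne ⟨p.1.2, hb⟩ ⟨p.1.2, hb'⟩
  · cases h
  · cases h
  · exact congrArg _ (Sum.inr_injective h)

theorem rvd_le {m : ℕ} [Fintype V] [DecidableRel G.Adj] (col : G.Coloring (Fin m)) :
    rvd (HSplit G k) ≤ k * m + 3 * G.edgeFinset.card := by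
  refine (rvd_le_card (isRVDColoring_of_coloring col)).trans_eq ?_
  simp [edgeFinset_card, mul_comm]

section RVDColoring

variable {α : Type*} {c : (V × Fin k) ⊕ (G.edgeSet × Fin 3) → α}

theorem injOn_closedNbhd_inr (hk : 0 < k) (hc : IsRVDColoring (HSplit G k) c)
    (p : G.edgeSet × Fin 3) :
    Set.InjOn c (insert (.inr p) ((HSplit G k).neighborSet (.inr p))) := by
  obtain ⟨⟨e, he⟩, -⟩ := p
  induction e using Sym2.ind with
  | _ u v =>
  let t (i : Fin 3) : (V × Fin k) ⊕ (G.edgeSet × Fin 3) := .inr (⟨s(u, v), he⟩, i)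
  refine injOn_of_pairwise_injOn_diff t ?_ fun i i' hii' => ?_
  · let x : (V × Fin k) ⊕ (G.edgeSet × Fin 3) := .inl (u, ⟨0, hk⟩)
    let y : (V × Fin k) ⊕ (G.edgeSet × Fin 3) := .inl (v, ⟨0, hk⟩)
    have hxy : x ≠ y := by simpa [x, y] using G.ne_of_adj he
    have ht (i : Fin 3) : t i ∈ (HSplit G k).commonNeighbors x y := by
      simp [t, x, y, mem_commonNeighbors]
    intro i i' h
    simpa [t] using hc.injOn_commonNeighbors hxy (not_adj_inl_inl _ _) (ht i) (ht i') h
  · refine (hc.injOn_insert_commonNeighbors (x := t i) (y := t i') (by simp [t, hii'])).symm.imp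
      (·.mono ?_) (·.mono ?_)
    · rintro w ⟨hw, hne⟩
      exact or_iff_not_imp_left.2 fun h => mem_commonNeighbors_of_mem_closedNbhd hw hne h
    · rintro w ⟨hw, hne⟩
      exact or_iff_not_imp_left.2 fun h => mem_commonNeighbors_of_mem_closedNbhd hw h hne

theorem injective_comp_inr (hk : 0 < k) (hc : IsRVDColoring (HSplit G k) c) :
    Function.Injective (c ∘ Sum.inr) := fun p q h =>
  Sum.inr_injective (injOn_closedNbhd_inr hk hc p (inr_mem_closedNbhd_inr p p)
    (inr_mem_closedNbhd_inr p q) h)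

theorem apply_inl_ne_apply_inr (hiso : ∀ v : V, ∃ u : V, G.Adj v u) (hk : 0 < k)
    (hc : IsRVDColoring (HSplit G k) c) (a : V × Fin k) (q : G.edgeSet × Fin 3) :
    c (.inl a) ≠ c (.inr q) := fun h => by
  obtain ⟨w, haw⟩ := hiso a.1
  let p : G.edgeSet × Fin 3 := (⟨s(a.1, w), haw⟩, 0)
  exact Sum.inl_ne_inr (injOn_closedNbhd_inr hk hc p
    (inl_mem_closedNbhd_inr.2 (Sym2.mem_mk_left _ _)) (inr_mem_closedNbhd_inr p q) h)

theorem injOn_inl_of_mem_edge (hk : 0 < k) (hc : IsRVDColoring (HSplit G k) c)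
    (e : G.edgeSet) : Set.InjOn (c ∘ Sum.inl) {a | a.1 ∈ (e : Sym2 V)} := fun _ ha _ hb h =>
  Sum.inl_injective (injOn_closedNbhd_inr hk hc (e, 0) (inl_mem_closedNbhd_inr.2 ha)
    (inl_mem_closedNbhd_inr.2 hb) h)

end RVDColoring

theorem kfoldChromaticNumber_add_le [Fintype V] [DecidableRel G.Adj]
    (hiso : ∀ v : V, ∃ u : V, G.Adj v u) (hk : 0 < k) {n : ℕ}
    {c : (V × Fin k) ⊕ (G.edgeSet × Fin 3) → Fin n} (hc : IsRVDColoring (HSplit G k) c) :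
    kfoldChromaticNumber G k + 3 * G.edgeFinset.card ≤ n := by
  classical
  set s : Finset (Fin n) := Finset.univ.image (c ∘ Sum.inr)
  have hs : s.card = 3 * G.edgeFinset.card := by
    rw [Finset.card_image_of_injective _ (injective_comp_inr hk hc), Finset.card_univ,
      Fintype.card_prod, Fintype.card_fin, edgeFinset_card, mul_comm]
  have hsep (a : V × Fin k) : c (.inl a) ∈ sᶜ := by
    simpa [s] using fun q => (apply_inl_ne_apply_inr hiso hk hc a q).symm
  let f (u : V) : Finset ↥sᶜ := Finset.univ.image fun j => ⟨c (.inl (u, j)), hsep _⟩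
  have hcard (u : V) : (f u).card = k := by
    obtain ⟨w, huw⟩ := hiso u
    rw [Finset.card_image_of_injective, Finset.card_univ, Fintype.card_fin]
    intro j j' h
    simpa using injOn_inl_of_mem_edge hk hc ⟨s(u, w), huw⟩ (Sym2.mem_mk_left u w)
      (Sym2.mem_mk_left u w) (congrArg Subtype.val h)
  have hdisj (u v : V) (huv : G.Adj u v) : Disjoint (f u) (f v) := by
    simp only [f, Finset.disjoint_left, Finset.mem_image, Finset.mem_univ, true_and]
    rintro _ ⟨j, rfl⟩ ⟨j', h⟩
    have := injOn_inl_of_mem_edge hk hc ⟨s(u, v), huv⟩ (Sym2.mem_mk_right u v)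
      (Sym2.mem_mk_left u v) (congrArg Subtype.val h)
    exact huv.ne (congrArg Prod.fst this).symm
  have hχ := kfoldChromaticNumber_le_card G f hcard hdisj
  rw [Fintype.card_coe, Finset.card_compl, Fintype.card_fin, hs] at hχ
  have hsn := s.card_le_univ
  rw [Fintype.card_fin, hs] at hsn
  omega

end HSplit

theorem rvd_HSplit_bounds_general [Fintype V] (G : SimpleGraph V)
    [DecidableRel G.Adj]
    (hiso : ∀ v : V, ∃ u : V, G.Adj v u)
    (k : ℕ) (hk : 0 < k) :
    ((k : ℝ) * (Fintype.card V : ℝ) / (indepNumber G : ℝ) + 3 * (G.edgeFinset.card : ℝ)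
        ≤ (k : ℝ) * fracChromaticNumber G + 3 * (G.edgeFinset.card : ℝ)) ∧
    ((k : ℝ) * fracChromaticNumber G + 3 * (G.edgeFinset.card : ℝ)
        ≤ (kfoldChromaticNumber G k : ℝ) + 3 * (G.edgeFinset.card : ℝ)) ∧
    (kfoldChromaticNumber G k + 3 * G.edgeFinset.card ≤ rvd (HSplit G k)) ∧
    (rvd (HSplit G k) ≤ k * natChromaticNumber G + 3 * G.edgeFinset.card) := by
  obtain ⟨c, hc⟩ := exists_isRVDColoring_rvd (HSplit G k)
  have hcol : G.Colorable (natChromaticNumber G) :=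
    Nat.sInf_mem (s := {n | G.Colorable n}) ⟨_, G.colorable_of_fintype⟩
  refine ⟨?_, ?_, HSplit.kfoldChromaticNumber_add_le hiso hk hc, HSplit.rvd_le hcol.some⟩
  · grw [mul_div_assoc, card_div_indepNumber_le_fracChromaticNumber G]
  · grw [mul_fracChromaticNumber_le G hk]

/-- For the graph `H` built from `k` copies of `V` together with the clique
`V_s`, we have `kn/α(G) + 3|E| ≤ k·χ_f(G) + 3|E| ≤ χ_k(G) + 3|E| ≤ rvd(H) ≤
k·χ(G) + 3|E|`. -/
theorem rvd_HSplit_bounds [Fintype V] [DecidableEq V] (G : SimpleGraph V)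
    [DecidableRel G.Adj]
    (hiso : ∀ v : V, ∃ u : V, G.Adj v u) (hE : G.edgeSet.Nonempty)
    (k : ℕ) (hk : 0 < k) :
    ((k : ℝ) * (Fintype.card V : ℝ) / (indepNumber G : ℝ) + 3 * (G.edgeFinset.card : ℝ)
        ≤ (k : ℝ) * fracChromaticNumber G + 3 * (G.edgeFinset.card : ℝ)) ∧
    ((k : ℝ) * fracChromaticNumber G + 3 * (G.edgeFinset.card : ℝ)
        ≤ (kfoldChromaticNumber G k : ℝ) + 3 * (G.edgeFinset.card : ℝ)) ∧
    (kfoldChromaticNumber G k + 3 * G.edgeFinset.card ≤ rvd (HSplit G k)) ∧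
    (rvd (HSplit G k) ≤ k * natChromaticNumber G + 3 * G.edgeFinset.card) :=
  rvd_HSplit_bounds_general G hiso k hk
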